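/- arXiv:2502.06096 — 2 statements merged into one kernel-verified Lean document; each statement's English description precedes it below -/
import Mathlib

section
/- Post-detection confidence set for the pre-change parameter: let C be any random subset of {1,…,τ}, measurable with respect to the data and auxiliary randomness, such that P_{θ₀,T,θ₁}(T ∈ C | τ ≥ T) ≥ 1 − α for all θ₀ ∈ Θ₀, θ₁ ∈ Θ₁, and T ∈ ℕ with P_{θ₀,∞}(τ ≥ T) > 0, where τ satisfies Assumption 1. Then for every η₀ ∈ (0,1) and every T ∈ ℕ, P_{θ₀,T,θ₁}( θ₀ ∈ ⋃_{t∈C} CI(X₁,…,X_{t−1}; 1 − η₀ r_t*) | τ ≥ T ) ≥ 1 − α − η₀. -/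
open MeasureTheory ProbabilityTheory Filter Set
open scoped ENNReal NNReal

namespace SeqChange

variable {𝒳 : Type*} [MeasurableSpace 𝒳]

/-- The σ-algebra on the sequence space generated by the coordinates with indices in `s`. -/
def coordSigma (𝒳 : Type*) [MeasurableSpace 𝒳] (s : Set ℕ) : MeasurableSpace (ℕ → 𝒳) :=
  ⨆ i ∈ s, MeasurableSpace.comap (fun ω : ℕ → 𝒳 => ω i) inferInstance

/-- The natural filtration `σ(X₁, …, Xₙ)` of the observation sequence (observations are
indexed from 1; coordinate 0 is unused). -/
def natFilt (𝒳 : Type*) [MeasurableSpace 𝒳] (n : ℕ) : MeasurableSpace (ℕ → 𝒳) :=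
  coordSigma 𝒳 {i | 1 ≤ i ∧ i ≤ n}

/-- `τ` is a stopping time with respect to the natural filtration of the observation
sequence, taking values in `ℕ ∪ {∞}`. -/
def IsStoppingTimeSeq (τ : (ℕ → 𝒳) → ℕ∞) : Prop :=
  ∀ n : ℕ, MeasurableSet[natFilt 𝒳 n] {ω | τ ω ≤ (n : ℕ∞)}

/-- `P` is the joint law of a sequence of independent observations `X₁, X₂, …` with
`Xₙ ~ ν n` for every `n ≥ 1`: a probability measure whose finite-dimensional
distributions on the coordinates with indices `≥ 1` are the corresponding products. -/
def IsProductLaw (P : Measure (ℕ → 𝒳)) (ν : ℕ → Measure 𝒳) : Prop :=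
  IsProbabilityMeasure P ∧
    ∀ s : Finset ℕ, (∀ i ∈ s, 1 ≤ i) → ∀ A : ℕ → Set 𝒳, (∀ i, MeasurableSet (A i)) →
      P {ω | ∀ i ∈ s, ω i ∈ A i} = ∏ i ∈ s, ν i (A i)

/-- `P` is the law `P_{F₀,T,F₁}`: independent coordinates, `Xₙ ~ F₀` for `n < T` and
`Xₙ ~ F₁` for `n ≥ T`. -/
def IsChangeLaw (P : Measure (ℕ → 𝒳)) (F₀ F₁ : Measure 𝒳) (T : ℕ) : Prop :=
  IsProductLaw P (fun n => if n < T then F₀ else F₁)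

/-- `P` is the law `P_{F₀,∞}`: all coordinates i.i.d. `F₀` (no change ever occurs). -/
def IsNoChangeLaw (P : Measure (ℕ → 𝒳)) (F₀ : Measure 𝒳) : Prop :=
  IsProductLaw P (fun _ => F₀)

/-- Under `Q`, the coordinates with indices in `I` are i.i.d. with law `ν`. -/
def IsIIDOn (Q : Measure (ℕ → 𝒳)) (ν : Measure 𝒳) (I : Set ℕ) : Prop :=
  IsProbabilityMeasure Q ∧
    ∀ s : Finset ℕ, (↑s ⊆ I) → ∀ A : ℕ → Set 𝒳, (∀ i, MeasurableSet (A i)) →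
      Q {ω | ∀ i ∈ s, ω i ∈ A i} = ∏ i ∈ s, ν (A i)

/-- Forward filtration `σ(X_t, …, X_n)`. -/
def fwdFilt (𝒳 : Type*) [MeasurableSpace 𝒳] (t n : ℕ) : MeasurableSpace (ℕ → 𝒳) :=
  coordSigma 𝒳 {i | t ≤ i ∧ i ≤ n}

/-- Backward filtration `σ(X_n, …, X_{t-1})`. -/
def bwdFilt (𝒳 : Type*) [MeasurableSpace 𝒳] (t n : ℕ) : MeasurableSpace (ℕ → 𝒳) :=
  coordSigma 𝒳 {i | n ≤ i ∧ i < t}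

/-- A forward `t`-delay e-process under the class `𝒫₁`: a nonnegative process
`(R n)_{n ≥ t}` adapted to the forward filtration `σ(X_t, …, X_n)` such that for every
`F₁ ∈ 𝒫₁`, every law `Q` under which `X_t, X_{t+1}, …` are i.i.d. `F₁`, and every
stopping time `κ ≥ t` of the forward filtration, `E_Q[R_κ] ≤ 1`. -/
def IsForwardEProcess (𝒫₁ : Set (Measure 𝒳)) (t : ℕ) (R : ℕ → (ℕ → 𝒳) → ℝ≥0∞) : Prop :=
  (∀ n, t ≤ n → Measurable[fwdFilt 𝒳 t n] (R n)) ∧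
    ∀ F₁ ∈ 𝒫₁, ∀ Q : Measure (ℕ → 𝒳), IsIIDOn Q F₁ {i | t ≤ i} →
      ∀ κ : (ℕ → 𝒳) → ℕ, (∀ ω, t ≤ κ ω) →
        (∀ n, MeasurableSet[fwdFilt 𝒳 t n] {ω | κ ω ≤ n}) →
        ∫⁻ ω, R (κ ω) ω ∂Q ≤ 1

/-- A backward `t`-delay e-process under the class `𝒫₀`: a nonnegative process
`(S n)_{1 ≤ n < t}` adapted to the backward filtration `σ(X_n, …, X_{t-1})` such that for
every `F₀ ∈ 𝒫₀`, every law `Q` under which `X₁, …, X_{t-1}` are i.i.d. `F₀`, and every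
stopping time `κ` of the backward filtration with `1 ≤ κ < t`, `E_Q[S_κ] ≤ 1`. -/
def IsBackwardEProcess (𝒫₀ : Set (Measure 𝒳)) (t : ℕ) (S : ℕ → (ℕ → 𝒳) → ℝ≥0∞) : Prop :=
  (∀ n, 1 ≤ n → n < t → Measurable[bwdFilt 𝒳 t n] (S n)) ∧
    ∀ F₀ ∈ 𝒫₀, ∀ Q : Measure (ℕ → 𝒳), IsIIDOn Q F₀ {i | 1 ≤ i ∧ i < t} →
      ∀ κ : (ℕ → 𝒳) → ℕ, (∀ ω, 1 ≤ κ ω ∧ κ ω < t) →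
        (∀ n, MeasurableSet[bwdFilt 𝒳 t n] {ω | n ≤ κ ω}) →
        ∫⁻ ω, S (κ ω) ω ∂Q ≤ 1

/-- The localization statistic `M_t` built from the estimator `T̂`, forward e-processes `R`
and backward e-processes `S`: `M_t = R^{(t)}_{T̂ - 1}` if `t < T̂ ≤ τ < ∞`, `M_t = 1` if
`t = T̂ ≤ τ < ∞`, `M_t = S^{(t)}_{T̂}` if `T̂ < t ≤ τ < ∞`, and `M_t = -∞` if `t > τ` or
`τ = ∞`. -/
noncomputable def eStat (τ : (ℕ → 𝒳) → ℕ∞) (That : (ℕ → 𝒳) → ℕ)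
    (R S : ℕ → ℕ → (ℕ → 𝒳) → ℝ≥0∞) (t : ℕ) (ω : ℕ → 𝒳) : EReal :=
  if (t : ℕ∞) ≤ τ ω ∧ τ ω ≠ ⊤ then
    if t < That ω then ((R t (That ω - 1) ω : ℝ≥0∞) : EReal)
    else if t = That ω then 1
    else ((S t (That ω) ω : ℝ≥0∞) : EReal)
  else ⊥

/-- `Quantile(1 − c; v)`: the `⌈(1 − c)·|v|⌉`-th smallest of the values in `v`. -/
noncomputable def quantileStat (c : ℝ) (v : Multiset EReal) : EReal :=
  (v.sort (· ≤ ·)).getD (⌈(1 - c) * (v.card : ℝ)⌉₊ - 1) ⊥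

/-- Membership in the stopped confidence sequence `CS(X_t, …, X_τ; 1 − c)`:
`θ ∈ CS(X_t,…,X_n; 1−c)` whenever `τ = n` (vacuously true when `τ = ∞`). -/
def stoppedCSMem {𝒳 : Type*} [MeasurableSpace 𝒳] {Θ : Type*} (τ : (ℕ → 𝒳) → ℕ∞)
    (CSset : ℝ → ℕ → ℕ → (ℕ → 𝒳) → Set Θ) (c : ℝ) (t : ℕ) (ω : ℕ → 𝒳) (θ : Θ) : Prop :=
  ∀ n : ℕ, t ≤ n → τ ω = (n : ℕ∞) → θ ∈ CSset c t n ω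

/-!
Conditionally on `{τ ≥ T}`, the set `C` contains `T` with probability at least `1 - α`, and
whenever it does, the union contains the interval built at time `T`. That interval, run at
the level `η₀ r_T*` drawn independently of the data, misses `θ₀` with probability at most
`η₀ E[r_T*] = η₀ P_{θ₀*,∞}(τ ≥ T) ≤ η₀ P_{θ₀,∞}(τ ≥ T)` by Assumption 1, and the last
probability equals `P_{θ₀,T,θ₁}(τ ≥ T)` because `{τ ≥ T}` depends only on the pre-change
observations. So the conditional miss probability is at most `η₀`, and a union bound gives
`1 - α - η₀`.
-/

section RandomLevel

variable {X Ω : Type*} [MeasurableSpace X] [MeasurableSpace Ω]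

theorem measure_le_add_measure_compl {μ : Measure X} {A B G : Set X} (h : A ∩ B ⊆ G) :
    μ A ≤ μ G + μ Bᶜ :=
  (measure_mono fun x hx => (em (x ∈ B)).imp (fun hxB => h ⟨hx, hxB⟩) id).trans
    (measure_union_le G Bᶜ)

theorem cond_le_of_measure_le_mul {μ : Measure X} [IsFiniteMeasure μ] {E S : Set X}
    {c : ℝ≥0∞} (h : μ S ≤ c * μ E) : μ[S|E] ≤ c := by
  rcases eq_or_ne (μ E) 0 with hE | hE
  · simp [cond_eq_zero_of_meas_eq_zero hE]
  calc μ[S|E] = (μ E)⁻¹ * μ.restrict E S := rfl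
    _ ≤ (μ E)⁻¹ * (c * μ E) := by gcongr; exact (Measure.restrict_apply_le E S).trans h
    _ = c := by rw [mul_comm, ENNReal.mul_inv_cancel_right hE (measure_ne_top μ E)]

theorem measure_compl_le_ofReal_of_coverage {P : Measure X} [IsProbabilityMeasure P]
    {S : Set X} (hS : MeasurableSet S) {c : ℝ} (hcov : c < 1 → ENNReal.ofReal (1 - c) ≤ P S) :
    P Sᶜ ≤ ENNReal.ofReal c := by
  rcases lt_or_ge c 1 with hc | hc
  · calc P Sᶜ = 1 - P S := prob_compl_eq_one_sub hS
      _ ≤ 1 - ENNReal.ofReal (1 - c) := tsub_le_tsub_left (hcov hc) 1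
      _ ≤ ENNReal.ofReal c := by
        rw [tsub_le_iff_right, ← ENNReal.ofReal_one]
        exact (congrArg ENNReal.ofReal (by ring)).trans_le ENNReal.ofReal_add_le
  · exact prob_le_one.trans (ENNReal.one_le_ofReal.2 hc)

theorem prod_compl_setOf_mem_le_ofReal_integral (P : Measure X) [IsProbabilityMeasure P]
    {μ : Measure Ω} [SFinite μ] {S : ℝ → Set X}
    (hS : MeasurableSet {q : X × ℝ | q.1 ∈ S q.2})
    (hcov : ∀ c ∈ Set.Ioo (0 : ℝ) 1, ENNReal.ofReal (1 - c) ≤ P (S c))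
    {ℓ : Ω → ℝ} (hℓ : Measurable ℓ) (hℓpos : ∀ᵐ a ∂μ, 0 < ℓ a) (hℓint : Integrable ℓ μ) :
    (P.prod μ) {q : X × Ω | q.1 ∈ S (ℓ q.2)}ᶜ ≤ ENNReal.ofReal (∫ a, ℓ a ∂μ) := by
  have hmeas : MeasurableSet {q : X × Ω | q.1 ∈ S (ℓ q.2)} :=
    measurable_fst.prodMk (hℓ.comp measurable_snd) hS
  rw [Measure.prod_apply_symm hmeas.compl,
    ofReal_integral_eq_lintegral_ofReal hℓint (hℓpos.mono fun _ ha => ha.le)]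
  refine lintegral_mono_ae (hℓpos.mono fun a ha => ?_)
  exact measure_compl_le_ofReal_of_coverage (measurable_prodMk_right hS)
    fun hlt => hcov _ ⟨ha, hlt⟩

end RandomLevel

theorem coordSigma_le (s : Set ℕ) : coordSigma 𝒳 s ≤ (inferInstance : MeasurableSpace (ℕ → 𝒳)) :=
  iSup₂_le fun i _ => (measurable_pi_apply i).comap_le

theorem exists_finset_cylinder_of_mem_piiUnionInter {s : Set ℕ} {B : Set (ℕ → 𝒳)}
    (hB : B ∈ piiUnionInter
      (fun i => {B | MeasurableSet[MeasurableSpace.comap (fun ω : ℕ → 𝒳 => ω i) inferInstance] B})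
      s) :
    ∃ t : Finset ℕ, ↑t ⊆ s ∧ ∃ A : ℕ → Set 𝒳, (∀ i, MeasurableSet (A i)) ∧
      B = {ω | ∀ i ∈ t, ω i ∈ A i} := by
  obtain ⟨t, hts, f, hf, rfl⟩ := hB
  have hA : ∀ i, ∃ A : Set 𝒳, MeasurableSet A ∧
      (i ∈ t → (fun ω : ℕ → 𝒳 => ω i) ⁻¹' A = f i) := by
    intro i
    by_cases hi : i ∈ t
    · obtain ⟨A, hA, hAf⟩ := hf i hi
      exact ⟨A, hA, fun _ => hAf⟩
    · exact ⟨Set.univ, .univ, fun h => absurd h hi⟩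
  choose A hA hAf using hA
  refine ⟨t, hts, A, hA, ?_⟩
  ext ω
  simp only [Set.mem_iInter, Set.mem_ofPred_eq]
  exact forall₂_congr fun i hi => by rw [← hAf i hi, Set.mem_preimage]

/-- The finite intersections of coordinate events form a generating π-system, on which both
laws are given by the same products. -/
theorem IsProductLaw.measure_eq_of_measurableSet_coordSigma {P Q : Measure (ℕ → 𝒳)}
    {ν₁ ν₂ : ℕ → Measure 𝒳} (hP : IsProductLaw P ν₁) (hQ : IsProductLaw Q ν₂) {s : Set ℕ}
    (hs : ∀ i ∈ s, 1 ≤ i) (hν : ∀ i ∈ s, ν₁ i = ν₂ i) {B : Set (ℕ → 𝒳)}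
    (hB : MeasurableSet[coordSigma 𝒳 s] B) : P B = Q B := by
  have := hP.1
  have := hQ.1
  have hgen : coordSigma 𝒳 s = MeasurableSpace.generateFrom (piiUnionInter
      (fun i => {B | MeasurableSet[MeasurableSpace.comap (fun ω : ℕ → 𝒳 => ω i) inferInstance] B})
      s) :=
    (generateFrom_piiUnionInter_measurableSet _ s).symm
  have htrim : P.trim (coordSigma_le s) = Q.trim (coordSigma_le s) := by
    refine ext_of_generate_finite _ hgen
      (isPiSystem_piiUnionInter _ (fun i => @MeasurableSpace.isPiSystem_measurableSet _
        (MeasurableSpace.comap (fun ω : ℕ → 𝒳 => ω i) inferInstance)) s) (fun C hC => ?_)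
      (by simp [trim_measurableSet_eq])
    have hCmeas : MeasurableSet[coordSigma 𝒳 s] C :=
      hgen ▸ MeasurableSpace.measurableSet_generateFrom hC
    obtain ⟨t, hts, A, hA, rfl⟩ := exists_finset_cylinder_of_mem_piiUnionInter hC
    rw [trim_measurableSet_eq _ hCmeas, trim_measurableSet_eq _ hCmeas,
      hP.2 t (fun i hi => hs i (hts hi)) A hA, hQ.2 t (fun i hi => hs i (hts hi)) A hA]
    exact Finset.prod_congr rfl fun i hi => by rw [hν i (hts hi)]
  rw [← trim_measurableSet_eq (coordSigma_le s) hB, htrim, trim_measurableSet_eq _ hB]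

theorem IsStoppingTimeSeq.measurableSet_lt {τ : (ℕ → 𝒳) → ℕ∞} (hτ : IsStoppingTimeSeq τ)
    (n : ℕ) : MeasurableSet[natFilt 𝒳 n] {ω | (n : ℕ∞) < τ ω} := by
  simpa only [Set.compl_ofPred, not_le] using (hτ n).compl

/-- `{τ ≥ T}` is determined by `X₁, …, X_{T-1}`, whose law is the same before and after
a change at `T`. -/
theorem IsChangeLaw.measure_le_stoppingTime_eq {τ : (ℕ → 𝒳) → ℕ∞}
    (hτ : IsStoppingTimeSeq τ) {P Q : Measure (ℕ → 𝒳)} {F₀ F₁ : Measure 𝒳} {T : ℕ}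
    (hP : IsChangeLaw P F₀ F₁ T) (hQ : IsNoChangeLaw Q F₀) (hT : 1 ≤ T) :
    P {ω | (T : ℕ∞) ≤ τ ω} = Q {ω | (T : ℕ∞) ≤ τ ω} := by
  obtain ⟨n, rfl⟩ : ∃ n, T = n + 1 := ⟨T - 1, by omega⟩
  have hset : {ω | ((n + 1 : ℕ) : ℕ∞) ≤ τ ω} = {ω | (n : ℕ∞) < τ ω} := by
    ext ω
    simp only [Set.mem_ofPred_eq, Nat.cast_add, Nat.cast_one]
    exact ENat.add_one_le_iff (ENat.natCast_ne_top n)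
  rw [hset]
  exact IsProductLaw.measure_eq_of_measurableSet_coordSigma hP hQ (fun i hi => hi.1)
    (fun i hi => if_pos (by have := hi.2; omega)) (hτ.measurableSet_lt n)

theorem prechange_parameter_confidence_general
    {𝒳 : Type*} [MeasurableSpace 𝒳] {Θ : Type*}
    (Θ₀ Θ₁ : Set Θ) (F : Θ → Measure 𝒳)
    (τ : (ℕ → 𝒳) → ℕ∞) (hτ : IsStoppingTimeSeq τ)
    -- Assumption 1: least favorable pre-change parameter θ₀*
    (Pinfs : Measure (ℕ → 𝒳))
    (hass1 : ∀ θ ∈ Θ₀, ∀ t : ℕ, ∀ Pinf' : Measure (ℕ → 𝒳), IsNoChangeLaw Pinf' (F θ) →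
      Pinfs {ω | (t : ℕ∞) ≤ τ ω} ≤ Pinf' {ω | (t : ℕ∞) ≤ τ ω})
    -- the auxiliary randomization carrying the estimators `r_t*`
    {Ωr : Type*} [MeasurableSpace Ωr] (μr : Measure Ωr) [IsProbabilityMeasure μr]
    (r : ℕ → Ωr → ℝ) (hrmeas : ∀ t, Measurable (r t))
    (hrpos : ∀ t, ∀ᵐ a ∂μr, 0 < r t a) (hrint : ∀ t, Integrable (r t) μr)
    (hrunb : ∀ t : ℕ, ∫ a, r t a ∂μr = (Pinfs {ω | (t : ℕ∞) ≤ τ ω}).toReal)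
    (α : ℝ)
    -- the confidence set `C ⊆ {1,…,τ}` for the changepoint
    (C : (ℕ → 𝒳) × Ωr → Set ℕ)
    (hCcov : ∀ θ₀ ∈ Θ₀, ∀ θ₁ ∈ Θ₁, ∀ T : ℕ, 1 ≤ T →
      ∀ P Pinf₀ : Measure (ℕ → 𝒳), IsChangeLaw P (F θ₀) (F θ₁) T →
        IsNoChangeLaw Pinf₀ (F θ₀) → Pinf₀ {ω | (T : ℕ∞) ≤ τ ω} ≠ 0 →
        ENNReal.ofReal (1 - α) ≤
          ProbabilityTheory.cond (P.prod μr) {q | (T : ℕ∞) ≤ τ q.1} {q | T ∈ C q})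
    -- the confidence interval procedure for the pre-change parameter
    (CIset : ℝ → ℕ → (ℕ → 𝒳) → Set Θ)
    (hCImeas : ∀ (t : ℕ) (θ : Θ), MeasurableSet {q : (ℕ → 𝒳) × ℝ | θ ∈ CIset q.2 t q.1})
    (hCI : ∀ c : ℝ, c ∈ Set.Ioo (0 : ℝ) 1 → ∀ t : ℕ, 1 ≤ t → ∀ θ₀ ∈ Θ₀, ∀ θ₁ ∈ Θ₁,
      ∀ P : Measure (ℕ → 𝒳), IsChangeLaw P (F θ₀) (F θ₁) t →
        ENNReal.ofReal (1 - c) ≤ P {ω | θ₀ ∈ CIset c t ω})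
    (η₀ : ℝ) (hη₀ : η₀ ∈ Set.Ioo (0 : ℝ) 1)
    (θ₀ : Θ) (hθ₀ : θ₀ ∈ Θ₀) (θ₁ : Θ) (hθ₁ : θ₁ ∈ Θ₁)
    (T : ℕ) (hT : 1 ≤ T)
    (P Pinf₀ : Measure (ℕ → 𝒳)) (hP : IsChangeLaw P (F θ₀) (F θ₁) T)
    (hPinf₀ : IsNoChangeLaw Pinf₀ (F θ₀))
    (hpos : Pinf₀ {ω | (T : ℕ∞) ≤ τ ω} ≠ 0) :
    ENNReal.ofReal (1 - α - η₀) ≤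
      ProbabilityTheory.cond (P.prod μr) {q : (ℕ → 𝒳) × Ωr | (T : ℕ∞) ≤ τ q.1}
        {q : (ℕ → 𝒳) × Ωr | θ₀ ∈ ⋃ t ∈ C q, CIset (η₀ * r t q.2) t q.1} := by
  have := hP.1
  set E₀ := {ω : ℕ → 𝒳 | (T : ℕ∞) ≤ τ ω}
  set E := {q : (ℕ → 𝒳) × Ωr | (T : ℕ∞) ≤ τ q.1}
  set covers := {q : (ℕ → 𝒳) × Ωr | θ₀ ∈ CIset (η₀ * r T q.2) T q.1}
  have hmiss : (P.prod μr)[coversᶜ|E] ≤ ENNReal.ofReal η₀ := by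
    refine cond_le_of_measure_le_mul ?_
    calc (P.prod μr) coversᶜ ≤ ENNReal.ofReal (∫ a, η₀ * r T a ∂μr) :=
          prod_compl_setOf_mem_le_ofReal_integral P (hCImeas T θ₀)
            (fun c hc => hCI c hc T hT θ₀ hθ₀ θ₁ hθ₁ P hP) (measurable_const.mul (hrmeas T))
            ((hrpos T).mono fun _ ha => mul_pos hη₀.1 ha) ((hrint T).const_mul η₀)
      _ ≤ ENNReal.ofReal η₀ * Pinfs E₀ := by
          rw [integral_const_mul, hrunb, ENNReal.ofReal_mul hη₀.1.le]
          gcongr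
          exact ENNReal.ofReal_toReal_le
      _ ≤ ENNReal.ofReal η₀ * (P.prod μr) E := by
          rw [show E = E₀ ×ˢ Set.univ by ext; simp [E, E₀], Measure.prod_prod, measure_univ,
            mul_one, IsChangeLaw.measure_le_stoppingTime_eq hτ hP hPinf₀ hT]
          gcongr ENNReal.ofReal η₀ * ?_
          exact hass1 θ₀ hθ₀ T Pinf₀ hPinf₀
  have hunion : {q | T ∈ C q} ∩ covers ⊆
      {q : (ℕ → 𝒳) × Ωr | θ₀ ∈ ⋃ t ∈ C q, CIset (η₀ * r t q.2) t q.1} :=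
    fun q hq => Set.mem_biUnion hq.1 hq.2
  calc ENNReal.ofReal (1 - α - η₀) = ENNReal.ofReal (1 - α) - ENNReal.ofReal η₀ :=
        ENNReal.ofReal_sub _ hη₀.1.le
    _ ≤ (P.prod μr)[{q | T ∈ C q}|E] - (P.prod μr)[coversᶜ|E] :=
        tsub_le_tsub (hCcov θ₀ hθ₀ θ₁ hθ₁ T hT P Pinf₀ hP hPinf₀ hpos) hmiss
    _ ≤ _ := tsub_le_iff_right.2 (measure_le_add_measure_compl hunion)

/-- Post-detection confidence set for the pre-change parameter: if `C`
is any random subset of `{1,…,τ}` with conditional coverage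
`P_{θ₀,T,θ₁}(T ∈ C | τ ≥ T) ≥ 1 − α` (for all `θ₀ ∈ Θ₀`, `θ₁ ∈ Θ₁`, `T` with
`P_{θ₀,∞}(τ ≥ T) > 0`), where `τ` satisfies Assumption 1, then for every `η₀ ∈ (0,1)`
and every `T`,
`P_{θ₀,T,θ₁}(θ₀ ∈ ⋃_{t∈C} CI(X₁,…,X_{t−1}; 1 − η₀ r_t*) | τ ≥ T) ≥ 1 − α − η₀`. -/
theorem prechange_parameter_confidence
    {𝒳 : Type*} [MeasurableSpace 𝒳] {Θ : Type*}
    (Θ₀ Θ₁ : Set Θ) (hdisj : Disjoint Θ₀ Θ₁) (F : Θ → Measure 𝒳)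
    (τ : (ℕ → 𝒳) → ℕ∞) (hτ : IsStoppingTimeSeq τ)
    -- Assumption 1: least favorable pre-change parameter θ₀*
    (θ₀s : Θ) (hθ₀s : θ₀s ∈ Θ₀)
    (Pinfs : Measure (ℕ → 𝒳)) (hPinfs : IsNoChangeLaw Pinfs (F θ₀s))
    (hass1 : ∀ θ ∈ Θ₀, ∀ t : ℕ, ∀ Pinf' : Measure (ℕ → 𝒳), IsNoChangeLaw Pinf' (F θ) →
      Pinfs {ω | (t : ℕ∞) ≤ τ ω} ≤ Pinf' {ω | (t : ℕ∞) ≤ τ ω})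
    -- the auxiliary randomization carrying the estimators `r_t*`
    {Ωr : Type*} [MeasurableSpace Ωr] (μr : Measure Ωr) [IsProbabilityMeasure μr]
    (r : ℕ → Ωr → ℝ) (hrmeas : ∀ t, Measurable (r t))
    (hrpos : ∀ t, ∀ᵐ a ∂μr, 0 < r t a) (hrint : ∀ t, Integrable (r t) μr)
    (hrunb : ∀ t : ℕ, ∫ a, r t a ∂μr = (Pinfs {ω | (t : ℕ∞) ≤ τ ω}).toReal)
    (α : ℝ) (hα : α ∈ Set.Ioo (0 : ℝ) 1)
    -- the confidence set `C ⊆ {1,…,τ}` for the changepoint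
    (C : (ℕ → 𝒳) × Ωr → Set ℕ)
    (hCmeas : ∀ t : ℕ, MeasurableSet {q : (ℕ → 𝒳) × Ωr | t ∈ C q})
    (hCsub : ∀ q, ∀ t ∈ C q, 1 ≤ t ∧ (t : ℕ∞) ≤ τ q.1)
    (hCcov : ∀ θ₀ ∈ Θ₀, ∀ θ₁ ∈ Θ₁, ∀ T : ℕ, 1 ≤ T →
      ∀ P Pinf₀ : Measure (ℕ → 𝒳), IsChangeLaw P (F θ₀) (F θ₁) T →
        IsNoChangeLaw Pinf₀ (F θ₀) → Pinf₀ {ω | (T : ℕ∞) ≤ τ ω} ≠ 0 →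
        ENNReal.ofReal (1 - α) ≤
          ProbabilityTheory.cond (P.prod μr) {q | (T : ℕ∞) ≤ τ q.1} {q | T ∈ C q})
    -- the confidence interval procedure for the pre-change parameter
    (CIset : ℝ → ℕ → (ℕ → 𝒳) → Set Θ)
    (hCImeas : ∀ (t : ℕ) (θ : Θ), MeasurableSet {q : (ℕ → 𝒳) × ℝ | θ ∈ CIset q.2 t q.1})
    (hCI : ∀ c : ℝ, c ∈ Set.Ioo (0 : ℝ) 1 → ∀ t : ℕ, 1 ≤ t → ∀ θ₀ ∈ Θ₀, ∀ θ₁ ∈ Θ₁,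
      ∀ P : Measure (ℕ → 𝒳), IsChangeLaw P (F θ₀) (F θ₁) t →
        ENNReal.ofReal (1 - c) ≤ P {ω | θ₀ ∈ CIset c t ω})
    (η₀ : ℝ) (hη₀ : η₀ ∈ Set.Ioo (0 : ℝ) 1)
    (θ₀ : Θ) (hθ₀ : θ₀ ∈ Θ₀) (θ₁ : Θ) (hθ₁ : θ₁ ∈ Θ₁)
    (T : ℕ) (hT : 1 ≤ T)
    (P Pinf₀ : Measure (ℕ → 𝒳)) (hP : IsChangeLaw P (F θ₀) (F θ₁) T)
    (hPinf₀ : IsNoChangeLaw Pinf₀ (F θ₀))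
    (hpos : Pinf₀ {ω | (T : ℕ∞) ≤ τ ω} ≠ 0) :
    ENNReal.ofReal (1 - α - η₀) ≤
      ProbabilityTheory.cond (P.prod μr) {q : (ℕ → 𝒳) × Ωr | (T : ℕ∞) ≤ τ q.1}
        {q : (ℕ → 𝒳) × Ωr | θ₀ ∈ ⋃ t ∈ C q, CIset (η₀ * r t q.2) t q.1} :=
  prechange_parameter_confidence_general Θ₀ Θ₁ F τ hτ Pinfs hass1 μr r hrmeas hrpos hrint hrunb α C
    hCcov CIset hCImeas hCI η₀ hη₀ θ₀ hθ₀ θ₁ hθ₁ T hT P Pinf₀ hP hPinf₀ hpos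

end SeqChange
end

section
/- Stochastic dominance of the likelihood-ratio statistic implies stochastic dominance of the CUSUM run length: let 𝒳 be a measurable space, ℓ : 𝒳 → [0,∞) a measurable function, A > 0, and define the CUSUM stopping time τ_cs := inf{n ∈ ℕ : max_{1≤j≤n} ∏_{i=j}^{n} ℓ(X_i) ≥ A} on the observation sequence (Xₙ). Let P and P* be probability measures on 𝒳 such that P(ℓ(X) > η) ≤ P*(ℓ(X) > η) for every η ∈ ℝ, where X denotes a single observation. Then for every t ∈ ℕ, P_{P,∞}(τ_cs ≥ t) ≥ P_{P*,∞}(τ_cs ≥ t), where P_{Q,∞} denotes the law of an i.i.d.-Q sequence. -/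
/-!
The event `{τ_cs ≥ t}` only depends on `ℓ(X₁), …, ℓ(X_{t-1})`, and, since the CUSUM statistic is
nondecreasing in every `ℓ(X_i) ≥ 0`, it is a lower set `D` of `[0, ∞)^{t-1}`. Under `P_{Q,∞}` the
vector `(ℓ(X_i))_{1≤i<t}` has the product law `(Q ∘ ℓ⁻¹)^{⊗(t-1)}`, so it suffices to show that
a product of coordinatewise stochastically smaller laws gives a lower set more mass. This goes
by induction on the dimension via Fubini: the slices of `D` are again lower sets, and they shrink
as the integrated coordinate grows, so the mass of a slice is an antitone function of that
coordinate, whose integral is handled by the one-dimensional case.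
-/

open MeasureTheory ProbabilityTheory Filter Set
open scoped ENNReal NNReal

namespace SeqChange

variable {𝒳 : Type*} [MeasurableSpace 𝒳]

/-- The CUSUM stopping time `τ_cs := inf{n ≥ 1 : max_{1≤j≤n} ∏_{i=j}^{n} ℓ(X_i) ≥ A}`,
with values in `ℕ ∪ {∞}` (and `τ_cs = ∞` when the threshold is never reached). -/
noncomputable def cusumTimeR (ℓ : 𝒳 → ℝ) (A : ℝ) (ω : ℕ → 𝒳) : ℕ∞ :=
  sInf {n : ℕ∞ | ∃ m : ℕ, 1 ≤ m ∧ n = (m : ℕ∞) ∧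
    ∃ j : ℕ, 1 ≤ j ∧ j ≤ m ∧ A ≤ ∏ i ∈ Finset.Icc j m, ℓ (ω i)}

end SeqChange

namespace MeasureTheory

variable {𝒳 : Type*} [MeasurableSpace 𝒳]

theorem measurable_fin_cons {k : ℕ} :
    Measurable fun p : 𝒳 × (Fin k → 𝒳) => (Fin.cons p.1 p.2 : Fin (k + 1) → 𝒳) := by
  simpa [MeasurableEquiv.piFinSuccAbove_symm_apply, Fin.insertNthEquiv, Fin.insertNth_zero']
    using (MeasurableEquiv.piFinSuccAbove (fun _ : Fin (k + 1) => 𝒳) 0).symm.measurable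

theorem measure_pi_fin_succ_eq_lintegral {k : ℕ} (μ : Fin (k + 1) → Measure 𝒳)
    [∀ i, SigmaFinite (μ i)] {D : Set (Fin (k + 1) → 𝒳)} (hD : MeasurableSet D) :
    Measure.pi μ D = ∫⁻ x, Measure.pi (fun i => μ i.succ) {y | Fin.cons x y ∈ D} ∂μ 0 := by
  rw [← (measurePreserving_piFinSuccAbove μ 0).symm.measure_preimage hD.nullMeasurableSet,
    Measure.prod_apply (MeasurableEquiv.measurable _ hD)]
  simp only [Fin.zero_succAbove, MeasurableEquiv.piFinSuccAbove_symm_apply, Fin.insertNthEquiv,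
    Fin.insertNth_zero', Equiv.coe_fn_mk]
  rfl

section StochasticOrder

variable {α : Type*} [LinearOrder α] [TopologicalSpace α] [OrderClosedTopology α]
  [MeasurableSpace α] [BorelSpace α]

theorem measure_Iic_le_of_measure_Ioi_le {μ ν : Measure α} [IsProbabilityMeasure μ]
    [IsProbabilityMeasure ν] (h : ∀ a, μ (Ioi a) ≤ ν (Ioi a)) (a : α) :
    ν (Iic a) ≤ μ (Iic a) := by
  rw [← compl_Ioi, prob_compl_eq_one_sub measurableSet_Ioi,
    prob_compl_eq_one_sub measurableSet_Ioi]
  exact tsub_le_tsub_left (h a) 1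

-- By inner regularity it suffices to bound `ν K` for compact `K ⊆ S`, and such a `K` lies
-- below its maximum, which is in `S`.
theorem measure_le_of_isLowerSet {μ ν : Measure α} [IsFiniteMeasure ν]
    [ν.InnerRegularCompactLTTop] (h : ∀ a, ν (Iic a) ≤ μ (Iic a)) {S : Set α}
    (hS : IsLowerSet S) : ν S ≤ μ S := by
  rw [hS.ordConnected.measurableSet.measure_eq_iSup_isCompact_of_ne_top (measure_ne_top ν S)]
  refine iSup₂_le fun K hKS => iSup_le fun hK => ?_
  obtain rfl | hne := K.eq_empty_or_nonempty
  · simp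
  obtain ⟨a, haK, ha⟩ := hK.exists_isGreatest hne
  calc ν K ≤ ν (Iic a) := measure_mono fun _ hx => ha hx
    _ ≤ μ (Iic a) := h a
    _ ≤ μ S := measure_mono (hS.Iic_subset (hKS haK))

-- Layer cake: the superlevel sets of an antitone function are lower sets.
theorem lintegral_le_of_antitone {μ ν : Measure α} [IsFiniteMeasure ν]
    [ν.InnerRegularCompactLTTop] (h : ∀ a, ν (Iic a) ≤ μ (Iic a)) {g : α → ℝ≥0∞}
    (hg : Antitone g) (hg_top : ∀ a, g a ≠ ∞) :
    ∫⁻ a, g a ∂ν ≤ ∫⁻ a, g a ∂μ := by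
  have layercake (ρ : Measure α) :
      ∫⁻ a, g a ∂ρ = ∫⁻ t in Ioi 0, ρ {a | t < (g a).toReal} := by
    rw [← lintegral_eq_lintegral_meas_lt ρ (.of_forall fun _ => ENNReal.toReal_nonneg)
      hg.measurable.ennreal_toReal.aemeasurable]
    simp_rw [ENNReal.ofReal_toReal (hg_top _)]
  rw [layercake, layercake]
  refine lintegral_mono fun t => measure_le_of_isLowerSet h fun a b hba hb => ?_
  exact hb.trans_le (ENNReal.toReal_mono (hg_top b) (hg hba))

theorem pi_le_of_isLowerSet {k : ℕ} {μ ν : Fin k → Measure α} [∀ i, IsProbabilityMeasure (μ i)]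
    [∀ i, IsProbabilityMeasure (ν i)] [∀ i, (ν i).InnerRegularCompactLTTop]
    (h : ∀ i a, ν i (Iic a) ≤ μ i (Iic a)) {D : Set (Fin k → α)} (hD : IsLowerSet D)
    (hDm : MeasurableSet D) :
    Measure.pi ν D ≤ Measure.pi μ D := by
  induction k with
  | zero => rw [Subsingleton.elim ν μ]
  | succ k ih =>
    have slice_lower (x : α) : IsLowerSet {y | Fin.cons x y ∈ D} :=
      fun _ _ hyy' hy' => hD (Fin.cons_le_cons.2 ⟨le_rfl, hyy'⟩) hy'
    have slice_measurable (x : α) : MeasurableSet {y : Fin k → α | Fin.cons x y ∈ D} :=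
      measurable_fin_cons.comp measurable_prodMk_left hDm
    have slice_antitone :
        Antitone fun x => Measure.pi (fun i => μ i.succ) {y | Fin.cons x y ∈ D} :=
      fun _ _ hxx' => measure_mono fun _ hy => hD (Fin.cons_le_cons.2 ⟨hxx', le_rfl⟩) hy
    rw [measure_pi_fin_succ_eq_lintegral ν hDm, measure_pi_fin_succ_eq_lintegral μ hDm]
    calc ∫⁻ x, Measure.pi (fun i => ν i.succ) {y | Fin.cons x y ∈ D} ∂ν 0
        ≤ ∫⁻ x, Measure.pi (fun i => μ i.succ) {y | Fin.cons x y ∈ D} ∂ν 0 :=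
          lintegral_mono fun x => ih (fun i => h i.succ) (slice_lower x) (slice_measurable x)
      _ ≤ ∫⁻ x, Measure.pi (fun i => μ i.succ) {y | Fin.cons x y ∈ D} ∂μ 0 :=
          lintegral_le_of_antitone (h 0) slice_antitone fun _ => measure_ne_top _ _

end StochasticOrder

end MeasureTheory

namespace SeqChange

section Cusum

variable {𝒳 : Type*}

theorem le_cusumTimeR_iff (ℓ : 𝒳 → ℝ) (A : ℝ) (ω : ℕ → 𝒳) (t : ℕ) :
    (t : ℕ∞) ≤ cusumTimeR ℓ A ω ↔
      ∀ j m, 1 ≤ j → j ≤ m → m < t → ∏ i ∈ Finset.Icc j m, ℓ (ω i) < A := by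
  simp only [cusumTimeR, le_sInf_iff, mem_ofPred_eq, forall_exists_index, and_imp]
  constructor
  · intro h j m hj hjm hmt
    by_contra! hA
    exact (h m m (hj.trans hjm) rfl j hj hjm hA).not_gt (by exact_mod_cast hmt)
  · rintro h _ m - rfl j hj hjm hA
    by_contra! hmt
    exact (h j m hj hjm (by exact_mod_cast hmt)).not_ge hA

-- No CUSUM alarm within the first `k` observations; `v i` stands for `ℓ(X_{i+1})`.
def cusumSurvivalSet (A : ℝ) (k : ℕ) : Set (Fin k → ℝ≥0) :=
  {v | ∀ j m : Fin k, j ≤ m → ∏ i ∈ Finset.Icc j m, (v i : ℝ) < A}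

theorem isLowerSet_cusumSurvivalSet (A : ℝ) (k : ℕ) : IsLowerSet (cusumSurvivalSet A k) :=
  fun _ _ hvw hv j m hjm =>
    (Finset.prod_le_prod (fun _ _ => NNReal.coe_nonneg _) fun i _ =>
      NNReal.coe_le_coe.2 (hvw i)).trans_lt (hv j m hjm)

theorem measurableSet_cusumSurvivalSet (A : ℝ) (k : ℕ) :
    MeasurableSet (cusumSurvivalSet A k) := by
  simp only [cusumSurvivalSet, ofPred_forall]
  exact .iInter fun _ => .iInter fun _ => .iInter fun _ =>
    measurableSet_lt (by fun_prop) measurable_const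

theorem prod_Icc_fin_eq_prod_Icc {M : Type*} [CommMonoid M] {k : ℕ} (x : ℕ → M) (j m : Fin k) :
    ∏ i ∈ Finset.Icc j m, x (i + 1) = ∏ i ∈ Finset.Icc ((j : ℕ) + 1) (m + 1), x i := by
  rw [← Finset.map_add_right_Icc, Finset.prod_map, ← Fin.map_valEmbedding_Icc, Finset.prod_map]
  rfl

theorem le_cusumTimeR_iff_mem_cusumSurvivalSet {ℓ : 𝒳 → ℝ} (hℓ : ∀ x, 0 ≤ ℓ x) (A : ℝ)
    (ω : ℕ → 𝒳) (t : ℕ) :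
    (t : ℕ∞) ≤ cusumTimeR ℓ A ω ↔
      (fun i : Fin (t - 1) => (ℓ (ω (i + 1))).toNNReal) ∈ cusumSurvivalSet A (t - 1) := by
  simp only [le_cusumTimeR_iff, cusumSurvivalSet, mem_ofPred_eq, Real.coe_toNNReal _ (hℓ _),
    prod_Icc_fin_eq_prod_Icc fun i => ℓ (ω i)]
  constructor
  · exact fun h j m hjm => h _ _ (by omega) (by simpa using hjm) (by omega)
  · intro h j m hj hjm hmt
    obtain ⟨j, rfl⟩ : ∃ j', j = j' + 1 := ⟨j - 1, by omega⟩
    obtain ⟨m, rfl⟩ : ∃ m', m = m' + 1 := ⟨m - 1, by omega⟩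
    exact h ⟨j, by omega⟩ ⟨m, by omega⟩ (by simpa using hjm)

end Cusum

variable {𝒳 : Type*} [MeasurableSpace 𝒳]

theorem IsProductLaw.map_eq_pi {Q : Measure (ℕ → 𝒳)} {ν : ℕ → Measure 𝒳}
    [∀ n, SigmaFinite (ν n)] (hQ : IsProductLaw Q ν) (k : ℕ) :
    Q.map (fun ω (i : Fin k) => ω (i + 1)) = Measure.pi fun i : Fin k => ν (i + 1) := by
  refine (Measure.pi_eq fun s hs => ?_).symm
  set A : ℕ → Set 𝒳 := fun n => ⋂ (i : Fin k) (_ : (i : ℕ) + 1 = n), s i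
  have hA (i : Fin k) : A (i + 1) = s i := by
    simp [A, Fin.val_inj]
  have hevent : (fun (ω : ℕ → 𝒳) (i : Fin k) => ω (i + 1)) ⁻¹' univ.pi s =
      {ω : ℕ → 𝒳 | ∀ n ∈ (Finset.univ : Finset (Fin k)).map
        (Fin.valEmbedding.trans (addRightEmbedding 1)), ω n ∈ A n} := by
    ext ω
    simp [hA]
  rw [Measure.map_apply (by fun_prop) (.univ_pi hs), hevent,
    hQ.2 _ (by simp) A fun n => .iInter fun i => .iInter fun _ => hs i, Finset.prod_map]
  simp [hA]

theorem IsProductLaw.map_comp_eq_pi {β : Type*} [MeasurableSpace β] {Q : Measure (ℕ → 𝒳)}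
    {ν : ℕ → Measure 𝒳} [∀ n, IsFiniteMeasure (ν n)] (hQ : IsProductLaw Q ν) {f : 𝒳 → β}
    (hf : Measurable f) (k : ℕ) :
    Q.map (fun ω (i : Fin k) => f (ω (i + 1))) =
      Measure.pi fun i : Fin k => (ν (i + 1)).map f := by
  rw [← Measure.pi_map_pi fun _ => hf.aemeasurable, ← hQ.map_eq_pi k,
    Measure.map_map (by fun_prop) (by fun_prop)]
  rfl

theorem cusum_run_length_stochastic_dominance_general
    {𝒳 : Type*} [MeasurableSpace 𝒳]
    (ℓ : 𝒳 → ℝ) (hℓmeas : Measurable ℓ) (hℓnonneg : ∀ x, 0 ≤ ℓ x)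
    (A : ℝ)
    (P Ps : Measure 𝒳) [IsProbabilityMeasure P] [IsProbabilityMeasure Ps]
    (hdom : ∀ η : ℝ, P {x | η < ℓ x} ≤ Ps {x | η < ℓ x})
    (t : ℕ)
    (Q Qs : Measure (ℕ → 𝒳)) (hQ : IsNoChangeLaw Q P) (hQs : IsNoChangeLaw Qs Ps) :
    Qs {ω | (t : ℕ∞) ≤ cusumTimeR ℓ A ω} ≤ Q {ω | (t : ℕ∞) ≤ cusumTimeR ℓ A ω} := by
  set ℓ' : 𝒳 → ℝ≥0 := fun x => (ℓ x).toNNReal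
  have hℓ' : Measurable ℓ' := hℓmeas.real_toNNReal
  have hdom' (a : ℝ≥0) : P.map ℓ' (Ioi a) ≤ Ps.map ℓ' (Ioi a) := by
    simp only [Measure.map_apply hℓ' measurableSet_Ioi, preimage, mem_Ioi, ℓ',
      Real.lt_toNNReal_iff_coe_lt]
    exact hdom a
  have hevent : {ω | (t : ℕ∞) ≤ cusumTimeR ℓ A ω} =
      (fun ω (i : Fin (t - 1)) => ℓ' (ω (i + 1))) ⁻¹' cusumSurvivalSet A (t - 1) :=
    ext fun ω => le_cusumTimeR_iff_mem_cusumSurvivalSet hℓnonneg A ω t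
  have := Measure.isProbabilityMeasure_map (μ := P) hℓ'.aemeasurable
  have := Measure.isProbabilityMeasure_map (μ := Ps) hℓ'.aemeasurable
  rw [hevent, ← Measure.map_apply (by fun_prop) (measurableSet_cusumSurvivalSet A _),
    ← Measure.map_apply (by fun_prop) (measurableSet_cusumSurvivalSet A _),
    hQ.map_comp_eq_pi hℓ', hQs.map_comp_eq_pi hℓ']
  exact pi_le_of_isLowerSet (fun _ => measure_Iic_le_of_measure_Ioi_le hdom')
    (isLowerSet_cusumSurvivalSet A _) (measurableSet_cusumSurvivalSet A _)

/-- Stochastic dominance of the likelihood-ratio statistic implies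
stochastic dominance of the CUSUM run length: if `P(ℓ(X) > η) ≤ P*(ℓ(X) > η)` for every
`η`, then for every `t`, `P_{P,∞}(τ_cs ≥ t) ≥ P_{P*,∞}(τ_cs ≥ t)`. -/
theorem cusum_run_length_stochastic_dominance
    {𝒳 : Type*} [MeasurableSpace 𝒳]
    (ℓ : 𝒳 → ℝ) (hℓmeas : Measurable ℓ) (hℓnonneg : ∀ x, 0 ≤ ℓ x)
    (A : ℝ) (hA : 0 < A)
    (P Ps : Measure 𝒳) [IsProbabilityMeasure P] [IsProbabilityMeasure Ps]
    (hdom : ∀ η : ℝ, P {x | η < ℓ x} ≤ Ps {x | η < ℓ x})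
    (t : ℕ)
    (Q Qs : Measure (ℕ → 𝒳)) (hQ : IsNoChangeLaw Q P) (hQs : IsNoChangeLaw Qs Ps) :
    Qs {ω | (t : ℕ∞) ≤ cusumTimeR ℓ A ω} ≤ Q {ω | (t : ℕ∞) ≤ cusumTimeR ℓ A ω} :=
  cusum_run_length_stochastic_dominance_general ℓ hℓmeas hℓnonneg A P Ps hdom t Q Qs hQ hQs

end SeqChange
end
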